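/- There exist a convex body K in ℝ² containing a point of S¹ as a boundary point (namely a triangle, e.g. a translate of conv{0,e_1,e_2} with the origin in its interior), a continuous function f:S¹→[0,1], and a point u ∈ S¹ such that the one-sided derivatives of t ↦ h_{K_t(f)}(u) at t=0 differ; in particular the derivative d/dt h_{K_t(f)}(u)|_{t=0} does not exist at u, so the S_K-almost everywhere differentiability in the previous theorem cannot be improved to everywhere differentiability. -/

import Mathlib

open scoped Pointwise NNReal ENNReal
open MeasureTheory Metric Set Filter

noncomputable section

abbrev Euc (n : ℕ) : Type := EuclideanSpace ℝ (Fin n)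

/-- A convex body: a compact convex set with nonempty interior. -/
def IsConvexBody {n : ℕ} (K : Set (Euc n)) : Prop :=
  Convex ℝ K ∧ IsCompact K ∧ (interior K).Nonempty

/-- The mixed volume of `n` compact convex sets in `ℝⁿ`, via the polarization formula. -/
noncomputable def mixedVolume {n : ℕ} (K : Fin n → Set (Euc n)) : ℝ :=
  (n.factorial : ℝ)⁻¹ *
    ∑ S ∈ Finset.univ.powerset.filter (fun S : Finset (Fin n) => S.Nonempty),
      (-1 : ℝ) ^ (n - S.card) * (volume (∑ i ∈ S, K i)).toReal

/-- The support function of a set. -/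
noncomputable def suppFn {n : ℕ} (K : Set (Euc n)) (u : Euc n) : ℝ :=
  sSup ((fun x => (inner ℝ x u : ℝ)) '' K)

/-- The face of `K` with outer normal `u`. -/
def face {n : ℕ} (K : Set (Euc n)) (u : Euc n) : Set (Euc n) :=
  {x ∈ K | (inner ℝ x u : ℝ) = suppFn K u}

/-- The surface area measure of `K`, as a set function:
`S_K(Ω) = H^{n-1}(τ(K,Ω))` where `τ(K,Ω)` is the inverse spherical image. -/
noncomputable def surfMeas {n : ℕ} (K : Set (Euc n)) (Ω : Set (Euc n)) : ℝ≥0∞ :=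
  μH[(n : ℝ) - 1] {x | x ∈ frontier K ∧ ∃ u ∈ Ω, ‖u‖ = 1 ∧ (inner ℝ x u : ℝ) = suppFn K u}

/-- The mixed area measure `S(K_1,…,K_{n-1}, Ω)` via the polarization formula. -/
noncomputable def mixedAreaMeas {n : ℕ} (K : Fin (n - 1) → Set (Euc n)) (Ω : Set (Euc n)) : ℝ :=
  ((n - 1).factorial : ℝ)⁻¹ *
    ∑ S ∈ Finset.univ.powerset.filter (fun S : Finset (Fin (n - 1)) => S.Nonempty),
      (-1 : ℝ) ^ (n - 1 - S.card) * (surfMeas (∑ i ∈ S, K i) Ω).toReal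

/-- The `m`-dimensional mixed volume of `m` compact convex sets lying in (translates of) an
`m`-dimensional subspace of `ℝⁿ`, computed with the `m`-dimensional Hausdorff measure. -/
noncomputable def hausdorffMixedVolume {n : ℕ} (m : ℕ) (K : Fin m → Set (Euc n)) : ℝ :=
  (m.factorial : ℝ)⁻¹ *
    ∑ S ∈ Finset.univ.powerset.filter (fun S : Finset (Fin m) => S.Nonempty),
      (-1 : ℝ) ^ (m - S.card) * (μH[(m : ℝ)] (∑ i ∈ S, K i)).toReal

/-- The Wulff shape of a function `g` (only the values of `g` on the unit sphere matter). -/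
def wulff {n : ℕ} (g : Euc n → ℝ) : Set (Euc n) :=
  {x | ∀ u : Euc n, ‖u‖ = 1 → (inner ℝ x u : ℝ) ≤ g u}

/-- `A` is homothetic to `B` if `A = λ • B + v` for some `λ > 0`, `v ∈ ℝⁿ`. -/
def Homothetic {n : ℕ} (A B : Set (Euc n)) : Prop :=
  ∃ lam : ℝ, 0 < lam ∧ ∃ v : Euc n, A = (fun x => lam • x + v) '' B

/-- `K` is weakly decomposable if there is a nonempty compact convex set `M`, not homothetic
to `K`, with `S_{K+M}` absolutely continuous with respect to `S_K`. -/
def WeaklyDecomposable {n : ℕ} (K : Set (Euc n)) : Prop :=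
  ∃ M : Set (Euc n), Convex ℝ M ∧ IsCompact M ∧ M.Nonempty ∧ ¬ Homothetic M K ∧
    ∀ Ω : Set (Euc n), MeasurableSet Ω → surfMeas K Ω = 0 → surfMeas (K + M) Ω = 0

def IsSimplex {n : ℕ} (K : Set (Euc n)) : Prop :=
  ∃ p : Fin (n + 1) → Euc n, AffineIndependent ℝ p ∧ K = convexHull ℝ (Set.range p)

def IsPolytope {n : ℕ} (K : Set (Euc n)) : Prop :=
  ∃ S : Finset (Euc n), K = convexHull ℝ (S : Set (Euc n))

/-- The set of outer unit normals of facets ((n-1)-dimensional faces) of `K`. -/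
def facetNormals {n : ℕ} (K : Set (Euc n)) : Set (Euc n) :=
  {u | ‖u‖ = 1 ∧ Module.finrank ℝ (affineSpan ℝ (face K u)).direction = n - 1}

/-- A zonotope: a finite Minkowski sum of segments. -/
def IsZonotope {n : ℕ} (Z : Set (Euc n)) : Prop :=
  ∃ (m : ℕ) (v w : Fin m → Euc n), Z = ∑ i : Fin m, segment ℝ (v i) (w i)

/-- A zonoid: a compact convex set which is a Hausdorff-metric limit of zonotopes. -/
def IsZonoid {n : ℕ} (K : Set (Euc n)) : Prop :=
  IsCompact K ∧ Convex ℝ K ∧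
    ∃ Z : ℕ → Set (Euc n), (∀ m, IsZonotope (Z m)) ∧
      Tendsto (fun m => EMetric.hausdorffEdist (Z m) K) atTop (nhds 0)


/-!
Take the triangle `K` with vertices `A = (-1/4, -1/4)`, `B = (3/4, -1/4)`, `(-1/4, 3/4)` and
`f v = max 0 (4 v₀ - 3)`, which vanishes at the three outer facet normals of `K` and equals `1`
at `e₀`. For `t ≥ 0` the Wulff shape of `h_K + t f` is `K` itself: its constraints in the facet
directions are those of `K`, and they already cut out `K`. So `h_{K_t}(e₀) = 3/4`. For
`-1 ≤ t ≤ 0` the constraint in direction `e₀` reads `x₀ ≤ 3/4 + t`, and the point `B + t e₀` still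
satisfies every constraint, so `h_{K_t}(e₀) = 3/4 + t`. The one-sided derivatives at `0` are
`0` and `1`.
-/

section SupportFunction

variable {n : ℕ}

lemma inner_single_one_right (x : Euc n) (i : Fin n) :
    inner ℝ x (EuclideanSpace.single i 1) = x i := by
  simp [EuclideanSpace.inner_single_right]

lemma inner_le_suppFn {K : Set (Euc n)} (hK : Bornology.IsBounded K) {x : Euc n} (hx : x ∈ K)
    (u : Euc n) : inner ℝ x u ≤ suppFn K u := by
  obtain ⟨R, hR⟩ := hK.exists_norm_le
  refine le_csSup ⟨R * ‖u‖, ?_⟩ (mem_image_of_mem _ hx)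
  rintro _ ⟨y, hy, rfl⟩
  exact (real_inner_le_norm y u).trans (mul_le_mul_of_nonneg_right (hR y hy) (norm_nonneg u))

lemma suppFn_le {K : Set (Euc n)} (hK : K.Nonempty) {u : Euc n} {c : ℝ}
    (h : ∀ x ∈ K, inner ℝ x u ≤ c) : suppFn K u ≤ c :=
  csSup_le (hK.image _) (forall_mem_image.2 h)

lemma suppFn_eq_inner {K : Set (Euc n)} {x u : Euc n} (hx : x ∈ K)
    (h : ∀ y ∈ K, inner ℝ y u ≤ inner ℝ x u) : suppFn K u = inner ℝ x u :=
  IsGreatest.csSup_eq ⟨mem_image_of_mem _ hx, forall_mem_image.2 h⟩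

lemma subset_wulff_suppFn_add {K : Set (Euc n)} (hK : Bornology.IsBounded K) {g : Euc n → ℝ}
    (hg : ∀ u, ‖u‖ = 1 → 0 ≤ g u) : K ⊆ wulff (fun u => suppFn K u + g u) :=
  fun _ hx u hu => le_add_of_le_of_nonneg (inner_le_suppFn hK hx u) (hg u hu)

lemma wulff_suppFn_add_eq_self {K : Set (Euc n)} (hK : Bornology.IsBounded K) {g : Euc n → ℝ}
    (hg : ∀ u, ‖u‖ = 1 → 0 ≤ g u) {N : Set (Euc n)} (hN : ∀ u ∈ N, ‖u‖ = 1 ∧ g u = 0)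
    (hKN : {x | ∀ u ∈ N, inner ℝ x u ≤ suppFn K u} ⊆ K) :
    wulff (fun u => suppFn K u + g u) = K := by
  refine (Subset.antisymm ?_ (subset_wulff_suppFn_add hK hg))
  intro x hx
  refine hKN fun u hu => ?_
  simpa [(hN u hu).2] using hx u (hN u hu).1

end SupportFunction

lemma not_hasDerivAt_of_hasDerivWithinAt_Ici_Iic {f : ℝ → ℝ} {x dp dm : ℝ}
    (hp : HasDerivWithinAt f dp (Ici x) x) (hm : HasDerivWithinAt f dm (Iic x) x)
    (hne : dp ≠ dm) : ¬ ∃ d, HasDerivAt f d x := by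
  rintro ⟨d, hd⟩
  have hdp := (uniqueDiffOn_Ici x x self_mem_Ici).eq_deriv _ hd.hasDerivWithinAt hp
  have hdm := (uniqueDiffOn_Iic x x self_mem_Iic).eq_deriv _ hd.hasDerivWithinAt hm
  exact hne (hdp.symm.trans hdm)

namespace TriangleExample

local notation "e₀" => EuclideanSpace.single (0 : Fin 2) (1 : ℝ)
local notation "e₁" => EuclideanSpace.single (1 : Fin 2) (1 : ℝ)

lemma inner_fin_two (x y : Euc 2) : inner ℝ x y = x 0 * y 0 + x 1 * y 1 := by
  simp [PiLp.inner_apply, Fin.sum_univ_two, mul_comm]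

lemma norm_fin_two (x : Euc 2) : ‖x‖ = √(x 0 ^ 2 + x 1 ^ 2) := by
  simp [EuclideanSpace.norm_eq, Fin.sum_univ_two]

lemma abs_apply_le_one {u : Euc 2} (hu : ‖u‖ = 1) (i : Fin 2) : |u i| ≤ 1 := by
  simpa [hu] using PiLp.norm_apply_le u i

lemma mem_convexHull_zero_single_single_iff {x : Euc 2} :
    x ∈ convexHull ℝ ({0, e₀, e₁} : Set (Euc 2)) ↔ 0 ≤ x 0 ∧ 0 ≤ x 1 ∧ x 0 + x 1 ≤ 1 := by
  constructor
  · refine fun hx =>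
      convexHull_min (t := {y : Euc 2 | 0 ≤ y 0 ∧ 0 ≤ y 1 ∧ y 0 + y 1 ≤ 1}) ?_ ?_ hx
    · rintro _ (rfl | rfl | rfl) <;> simp
    · rintro y ⟨hy0, hy1, hy⟩ z ⟨hz0, hz1, hz⟩ a b ha hb hab
      simp only [mem_ofPred_eq, PiLp.add_apply, PiLp.smul_apply, smul_eq_mul]
      refine ⟨by positivity, by positivity, ?_⟩
      nlinarith
  · rintro ⟨h0, h1, h⟩
    have hmem := (convex_convexHull ℝ ({0, e₀, e₁} : Set (Euc 2))).sum_mem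
      (t := Finset.univ) (w := ![1 - x 0 - x 1, x 0, x 1]) (z := ![0, e₀, e₁])
      (by intro i _; fin_cases i <;> simp <;> linarith)
      (by
        simp only [Fin.sum_univ_three, Matrix.cons_val_zero, Matrix.cons_val_one,
          Matrix.cons_val_two, Matrix.tail_cons, Matrix.head_cons]
        ring)
      (by intro i _; fin_cases i <;> exact subset_convexHull ℝ _ (by simp))
    convert hmem
    ext i; fin_cases i <;> simp [Fin.sum_univ_three]

def triangle : Set (Euc 2) :=
  (fun x => x + !₂[-1/4, -1/4]) '' convexHull ℝ {0, e₀, e₁}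

lemma mem_triangle_iff {x : Euc 2} :
    x ∈ triangle ↔ -1/4 ≤ x 0 ∧ -1/4 ≤ x 1 ∧ x 0 + x 1 ≤ 1/2 := by
  rw [triangle, image_add_right, mem_preimage, mem_convexHull_zero_single_single_iff]
  simp only [PiLp.add_apply, PiLp.neg_apply, Matrix.cons_val_zero, Matrix.cons_val_one,
    Matrix.cons_val_fin_one]
  constructor <;> rintro ⟨h0, h1, h⟩ <;> exact ⟨by linarith, by linarith, by linarith⟩

lemma isCompact_triangle : IsCompact triangle :=
  ((toFinite _).isCompact_convexHull ℝ).image (continuous_add_const _)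

lemma zero_mem_interior_triangle : (0 : Euc 2) ∈ interior triangle := by
  refine mem_interior.2 ⟨ball 0 (1/8), fun y hy => ?_, isOpen_ball, mem_ball_self (by norm_num)⟩
  have hy := (mem_ball_zero_iff.1 hy).le
  have h0 := abs_le.1 ((PiLp.norm_apply_le y 0).trans hy)
  have h1 := abs_le.1 ((PiLp.norm_apply_le y 1).trans hy)
  exact mem_triangle_iff.2 ⟨by linarith, by linarith, by linarith⟩

lemma isConvexBody_triangle : IsConvexBody triangle := by
  refine ⟨?_, isCompact_triangle, ⟨0, zero_mem_interior_triangle⟩⟩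
  rw [triangle, image_add_right]
  exact (convex_convexHull ℝ _).translate_preimage_left _

def bump (v : Euc 2) : ℝ := max 0 (4 * v 0 - 3)

lemma continuous_bump : Continuous bump := by
  unfold bump; fun_prop

lemma bump_mem_Icc {v : Euc 2} (hv : ‖v‖ = 1) : bump v ∈ Icc 0 1 :=
  ⟨le_max_left _ _, max_le zero_le_one (by linarith [(abs_le.1 (abs_apply_le_one hv 0)).2])⟩

lemma bump_single_zero : bump e₀ = 1 := by
  norm_num [bump]

lemma suppFn_triangle_single_zero : suppFn triangle e₀ = 3/4 := by
  rw [suppFn_eq_inner (x := !₂[3/4, -1/4]) (mem_triangle_iff.2 (by norm_num))]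
  · simp [inner_fin_two]
  · intro y hy
    obtain ⟨-, h1, h⟩ := mem_triangle_iff.1 hy
    simp only [inner_single_one_right, Matrix.cons_val_zero]
    linarith

lemma setOf_inner_le_suppFn_subset_triangle :
    {x | ∀ u ∈ ({-e₀, -e₁, !₂[√2/2, √2/2]} : Set (Euc 2)), inner ℝ x u ≤ suppFn triangle u}
      ⊆ triangle := by
  have hne : triangle.Nonempty := ⟨0, interior_subset zero_mem_interior_triangle⟩
  have hs_pos : 0 < √2/2 := by positivity
  have hb₀ : suppFn triangle (-e₀) ≤ 1/4 := suppFn_le hne fun y hy => by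
    simp only [inner_neg_right, inner_single_one_right]
    linarith [(mem_triangle_iff.1 hy).1]
  have hb₁ : suppFn triangle (-e₁) ≤ 1/4 := suppFn_le hne fun y hy => by
    simp only [inner_neg_right, inner_single_one_right]
    linarith [(mem_triangle_iff.1 hy).2.1]
  have hb₂ : suppFn triangle !₂[√2/2, √2/2] ≤ √2/2 * (1/2) := suppFn_le hne fun y hy => by
    simp only [inner_fin_two, Matrix.cons_val_zero, Matrix.cons_val_one, Matrix.cons_val_fin_one]
    nlinarith [(mem_triangle_iff.1 hy).2.2]
  intro x hx
  have h₀ := (hx _ (by simp)).trans hb₀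
  have h₁ := (hx _ (by simp)).trans hb₁
  have h₂ := (hx _ (by simp)).trans hb₂
  simp only [inner_neg_right, inner_single_one_right, inner_fin_two, Matrix.cons_val_zero,
    Matrix.cons_val_one, Matrix.cons_val_fin_one] at h₀ h₁ h₂
  exact mem_triangle_iff.2 ⟨by linarith, by linarith, by nlinarith⟩

lemma wulff_triangle_add_bump {t : ℝ} (ht : 0 ≤ t) :
    wulff (fun v => suppFn triangle v + t * bump v) = triangle := by
  refine wulff_suppFn_add_eq_self isCompact_triangle.isBounded
    (fun u _ => mul_nonneg ht (le_max_left _ _)) ?_ setOf_inner_le_suppFn_subset_triangle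
  have hs : (√2/2) ^ 2 = 1/2 := by rw [div_pow, Real.sq_sqrt zero_le_two]; norm_num
  rintro u (rfl | rfl | rfl)
  · norm_num [bump]
  · norm_num [bump]
  · refine ⟨by rw [norm_fin_two]; norm_num [hs], ?_⟩
    have : 4 * (√2/2) ≤ 3 := by nlinarith [Real.sqrt_nonneg 2]
    simp [bump, this]

lemma mem_wulff_triangle_add_bump {t : ℝ} (ht : -1 ≤ t) (ht0 : t ≤ 0) :
    !₂[3/4 + t, -1/4] ∈ wulff (fun v => suppFn triangle v + t * bump v) := by
  intro u hu
  have hA := inner_le_suppFn isCompact_triangle.isBounded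
    ((mem_triangle_iff (x := !₂[-1/4, -1/4])).2 (by norm_num)) u
  have hB := inner_le_suppFn isCompact_triangle.isBounded
    ((mem_triangle_iff (x := !₂[3/4, -1/4])).2 (by norm_num)) u
  have hu0 := abs_le.1 (abs_apply_le_one hu 0)
  -- Compare with `B` when `u₀ ≥ 0` and with `A` when `u₀ < 0`; where `bump u > 0` we still have
  -- `bump u ≤ u₀` (as `u₀ ≤ 1`), so `t * u₀ ≤ t * bump u` for `t ≤ 0`.
  simp only [inner_fin_two, Matrix.cons_val_zero, Matrix.cons_val_one,
    Matrix.cons_val_fin_one] at hA hB ⊢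
  rcases le_total (4 * u 0 - 3) 0 with hc | hc
  · rw [bump, max_eq_left hc]
    rcases le_total 0 (u 0) with h0 | h0 <;> nlinarith
  · rw [bump, max_eq_right hc]
    nlinarith

lemma suppFn_wulff_triangle_add_bump {t : ℝ} (ht : -1 ≤ t) (ht0 : t ≤ 0) :
    suppFn (wulff (fun v => suppFn triangle v + t * bump v)) e₀ = 3/4 + t := by
  rw [suppFn_eq_inner (mem_wulff_triangle_add_bump ht ht0)]
  · simp [inner_fin_two]
  · intro y hy
    simpa [inner_single_one_right, suppFn_triangle_single_zero, bump_single_zero]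
      using hy e₀ (by simp)

lemma hasDerivWithinAt_Ici_suppFn_wulff_triangle_add_bump :
    HasDerivWithinAt (fun t => suppFn (wulff (fun v => suppFn triangle v + t * bump v)) e₀)
      0 (Ici 0) 0 := by
  have hconst (t : ℝ) (ht : t ∈ Ici 0) :
      suppFn (wulff (fun v => suppFn triangle v + t * bump v)) e₀ = 3/4 := by
    rw [wulff_triangle_add_bump ht, suppFn_triangle_single_zero]
  exact (hasDerivWithinAt_const _ _ _).congr hconst (hconst 0 self_mem_Ici)

lemma hasDerivWithinAt_Iic_suppFn_wulff_triangle_add_bump :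
    HasDerivWithinAt (fun t => suppFn (wulff (fun v => suppFn triangle v + t * bump v)) e₀)
      1 (Iic 0) 0 := by
  have hlin : HasDerivWithinAt (fun t : ℝ => 3/4 + t) 1 (Iic 0) 0 :=
    (hasDerivWithinAt_id _ _).const_add _
  refine hlin.congr_of_eventuallyEq ?_ (suppFn_wulff_triangle_add_bump (by norm_num) le_rfl)
  filter_upwards [self_mem_nhdsWithin,
    nhdsWithin_le_nhds (Ioi_mem_nhds (by norm_num : (-1 : ℝ) < 0))] with t ht0 ht
  exact suppFn_wulff_triangle_add_bump (le_of_lt ht) ht0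

end TriangleExample

/-- There is a triangle `K ⊆ ℝ²` (a translate of `conv{0,e₁,e₂}` with `0 ∈ int K`),
a continuous `f : S¹ → [0,1]` and `u ∈ S¹` such that the one-sided derivatives of
`t ↦ h_{K_t(f)}(u)` at `t = 0` differ; in particular the derivative does not exist. -/
theorem suppFn_wulff_perturbation_not_deriv_everywhere :
    ∃ K : Set (Euc 2), IsConvexBody K ∧ (0 : Euc 2) ∈ interior K ∧
      (∃ v : Euc 2, K = (fun x => x + v) ''
        convexHull ℝ ({0, EuclideanSpace.single (0 : Fin 2) (1 : ℝ),
          EuclideanSpace.single (1 : Fin 2) (1 : ℝ)} : Set (Euc 2))) ∧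
      ∃ f : Euc 2 → ℝ, Continuous f ∧ (∀ u : Euc 2, ‖u‖ = 1 → f u ∈ Set.Icc (0 : ℝ) 1) ∧
        ∃ u : Euc 2, ‖u‖ = 1 ∧
          ∃ dp dm : ℝ, dp ≠ dm ∧
            HasDerivWithinAt (fun t => suppFn (wulff (fun v => suppFn K v + t * f v)) u)
              dp (Set.Ici 0) 0 ∧
            HasDerivWithinAt (fun t => suppFn (wulff (fun v => suppFn K v + t * f v)) u)
              dm (Set.Iic 0) 0 ∧
            ¬ ∃ d : ℝ, HasDerivAt (fun t => suppFn (wulff (fun v => suppFn K v + t * f v)) u)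
              d 0 := by
  open TriangleExample in
  exact ⟨triangle, isConvexBody_triangle, zero_mem_interior_triangle, ⟨_, rfl⟩, bump,
    continuous_bump, fun _ => bump_mem_Icc, _, by simp, 0, 1, zero_ne_one,
    hasDerivWithinAt_Ici_suppFn_wulff_triangle_add_bump,
    hasDerivWithinAt_Iic_suppFn_wulff_triangle_add_bump,
    not_hasDerivAt_of_hasDerivWithinAt_Ici_Iic hasDerivWithinAt_Ici_suppFn_wulff_triangle_add_bump
      hasDerivWithinAt_Iic_suppFn_wulff_triangle_add_bump zero_ne_one⟩
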